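/- arXiv:1804.04891 — 3 statements merged into one kernel-verified Lean document; each statement's English description precedes it below -/
import Mathlib

section
/- Let n ≥ 1 and a = (a_1,…,a_{n-1}) ∈ {0,1}^{n-1}. For t_1,…,t_n ∈ {0,1} define b_k = t_k XOR a_k·(t_{k+1} XOR ⋯ XOR t_n) for 1 ≤ k ≤ n-1 and b_n = t_n. Then the sum over all (t_1,…,t_n) ∈ {0,1}^n of ∑_{k=1}^{n} t_k·b_k / (2^{n+1-k}·2^k) equals (n + h + 1)/8, where h = #{i ∈ {1,…,n-1} : a_i = 0}. -/
open Finset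

/-- `b_k = t_k ⊕ a_k·(t_{k+1} ⊕ ⋯ ⊕ t_n)` (0-based indices; for the last index
the sum over larger indices is empty, so `b_n = t_n`). -/
def bvec (n : ℕ) (a : Fin (n-1) → ZMod 2) (t : Fin n → ZMod 2) (k : Fin n) : ZMod 2 :=
  t k + (if h : (k : ℕ) < n - 1 then a ⟨k, h⟩ else 0) *
    ∑ i ∈ Finset.univ.filter (fun i : Fin n => k < i), t i

/-!
After swapping the sums, position `k` contributes `2^{-(n+1)}` times the number of tuples with
`t_k = b_k = 1`. If `a_k = 0` or `k = n`, then `b_k = t_k` and there are `2^{n-1}` such tuples.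
If `a_k = 1`, then `t_k b_k = 1` means `t_k = 1` and `t_{k+1} + ⋯ + t_n = 0`; flipping `t_{k+1}`
exchanges this set with its complement inside `{t_k = 1}`, so it has `2^{n-2}` elements.
Summing `1/4` over the `h + 1` positions of the first kind and `1/8` over the other `n - 1 - h`
gives `(n + h + 1)/8`.
-/

lemma ZMod.eq_zero_or_eq_one_of_two (x : ZMod 2) : x = 0 ∨ x = 1 := by
  revert x; decide

lemma ZMod.val_mul_val_two {R : Type*} [Semiring R] (x y : ZMod 2) :
    (x.val : R) * y.val = if x = 1 ∧ y = 1 then 1 else 0 := by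
  obtain rfl | rfl := x.eq_zero_or_eq_one_of_two <;>
  obtain rfl | rfl := y.eq_zero_or_eq_one_of_two <;> simp [ZMod.val_one]

lemma ZMod.ne_iff_eq_add_one_two (x c : ZMod 2) : x ≠ c ↔ x = c + 1 := by
  revert x c; decide

lemma two_mul_card_filter_eq_card_of_translate {V : Type*} [AddGroup V] [DecidableEq V]
    (s : Finset V) (f : V → ZMod 2) (v : V) (hs : ∀ x, v + x ∈ s ↔ x ∈ s)
    (hf : ∀ x, f (v + x) = f x + 1) (c : ZMod 2) :
    2 * #{x ∈ s | f x = c} = #s := by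
  have hflip : #{x ∈ s | f x = c} = #{x ∈ s | f x = c + 1} := by
    refine card_nbij' (v + ·) (-v + ·) ?_ ?_ (fun x _ => neg_add_cancel_left v x)
      (fun x _ => add_neg_cancel_left v x)
    · intro x hx
      simp_all
    · intro x hx
      simp only [coe_filter, Set.mem_ofPred_eq] at hx ⊢
      have hmem := hs (-v + x)
      have hval := hf (-v + x)
      rw [add_neg_cancel_left] at hmem hval
      exact ⟨hmem.1 hx.1, (add_right_cancel (hx.2.symm.trans hval)).symm⟩
  rw [two_mul]
  nth_rewrite 2 [hflip]
  simp_rw [← ZMod.ne_iff_eq_add_one_two]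
  exact card_filter_add_card_filter_not _

section

variable {ι : Type*} [Fintype ι] [DecidableEq ι]

lemma two_mul_card_filter_apply_eq_one (k : ι) :
    2 * #{t : ι → ZMod 2 | t k = 1} = 2 ^ Fintype.card ι := by
  simpa using two_mul_card_filter_eq_card_of_translate univ (fun t : ι → ZMod 2 => t k)
    (Pi.single k 1) (by simp) (fun t => by simp [add_comm]) 1

lemma four_mul_card_filter_apply_eq_one_sum_eq_zero {k j : ι} (hjk : j ≠ k) {s : Finset ι}
    (hj : j ∈ s) :
    4 * #{t : ι → ZMod 2 | t k = 1 ∧ ∑ i ∈ s, t i = 0} = 2 ^ Fintype.card ι := by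
  have := two_mul_card_filter_eq_card_of_translate {t : ι → ZMod 2 | t k = 1}
    (fun t => ∑ i ∈ s, t i) (Pi.single j 1) (by simp [Pi.single_eq_of_ne' hjk])
    (fun t => by simp [sum_add_distrib, sum_pi_single', hj, add_comm]) 0
  rw [filter_filter] at this
  rw [← two_mul_card_filter_apply_eq_one k, ← this]
  ring

lemma sum_val_mul_val_self (k : ι) :
    ∑ t : ι → ZMod 2, ((t k).val : ℚ) * (t k).val = 2 ^ Fintype.card ι / 2 := by
  simp_rw [ZMod.val_mul_val_two, and_self]
  rw [sum_boole, eq_div_iff two_ne_zero, mul_comm]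
  exact_mod_cast two_mul_card_filter_apply_eq_one k

lemma sum_val_mul_val_add_sum {k j : ι} (hjk : j ≠ k) {s : Finset ι} (hj : j ∈ s) :
    ∑ t : ι → ZMod 2, ((t k).val : ℚ) * (t k + ∑ i ∈ s, t i).val = 2 ^ Fintype.card ι / 4 := by
  have hiff : ∀ t : ι → ZMod 2,
      (t k = 1 ∧ t k + ∑ i ∈ s, t i = 1) ↔ (t k = 1 ∧ ∑ i ∈ s, t i = 0) := by
    intro t
    constructor <;> rintro ⟨hk, hs⟩ <;> simp_all
  simp_rw [ZMod.val_mul_val_two, hiff]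
  rw [sum_boole, eq_div_iff four_ne_zero, mul_comm]
  exact_mod_cast four_mul_card_filter_apply_eq_one_sum_eq_zero hjk hj

end

lemma bvec_castSucc {m : ℕ} (a : Fin m → ZMod 2) (t : Fin (m + 1) → ZMod 2) (i : Fin m) :
    bvec (m + 1) a t i.castSucc = t i.castSucc + a i * ∑ j ∈ {j | i.castSucc < j}, t j := by
  simp [bvec]

lemma bvec_last {m : ℕ} (a : Fin m → ZMod 2) (t : Fin (m + 1) → ZMod 2) :
    bvec (m + 1) a t (Fin.last m) = t (Fin.last m) := by
  simp [bvec]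

lemma sum_val_mul_val_bvec_castSucc {m : ℕ} (a : Fin m → ZMod 2) (i : Fin m) :
    ∑ t : Fin (m + 1) → ZMod 2, ((t i.castSucc).val : ℚ) * (bvec (m + 1) a t i.castSucc).val
      = 2 ^ (m + 1) * (1 + if a i = 0 then 1 else 0) / 4 := by
  simp_rw [bvec_castSucc]
  obtain ha | ha := (a i).eq_zero_or_eq_one_of_two
  · simp only [ha, zero_mul, add_zero, sum_val_mul_val_self, Fintype.card_fin, if_true]
    ring
  · simp only [ha, one_mul, one_ne_zero, if_false]
    rw [sum_val_mul_val_add_sum (j := i.succ) (Fin.castSucc_lt_succ (i := i)).ne' (by simp)]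
    simp

lemma sum_val_mul_val_bvec_last {m : ℕ} (a : Fin m → ZMod 2) :
    ∑ t : Fin (m + 1) → ZMod 2, ((t (Fin.last m)).val : ℚ) * (bvec (m + 1) a t (Fin.last m)).val
      = 2 ^ (m + 1) / 2 := by
  simp_rw [bvec_last, sum_val_mul_val_self, Fintype.card_fin]

theorem stmt0 (n : ℕ) (hn : 1 ≤ n) (a : Fin (n-1) → ZMod 2) :
    ∑ t : Fin n → ZMod 2, ∑ k : Fin n,
        (((t k).val : ℚ) * ((bvec n a t k).val : ℚ)) / (2 ^ (n - (k : ℕ)) * 2 ^ ((k : ℕ) + 1))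
      = ((n : ℚ) + ((Finset.univ.filter (fun i : Fin (n-1) => a i = 0)).card : ℚ) + 1) / 8 := by
  obtain ⟨m, rfl⟩ : ∃ m, n = m + 1 := ⟨n - 1, by omega⟩
  have hden (k : Fin (m + 1)) : (2 : ℚ) ^ (m + 1 - k) * 2 ^ ((k : ℕ) + 1) = 2 ^ (m + 2) := by
    rw [← pow_add]
    congr 1
    omega
  have hzeros : ∑ i : Fin m, (1 + if a i = 0 then (1 : ℚ) else 0) = m + #{i | a i = 0} := by
    simp [sum_add_distrib]
  simp_rw [hden]
  rw [sum_comm]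
  simp_rw [← sum_div]
  rw [Fin.sum_univ_castSucc]
  simp only [sum_val_mul_val_bvec_castSucc, sum_val_mul_val_bvec_last]
  rw [← sum_div, ← mul_sum, hzeros, pow_succ _ (m + 1)]
  push_cast
  field_simp
  ring
end

section
/- Let n ≥ 1 and a = (a_1,…,a_{n-1}) ∈ {0,1}^{n-1}. For t_1,…,t_n ∈ {0,1} define b_k = t_k XOR a_k·(t_{k+1} XOR ⋯ XOR t_n) for 1 ≤ k ≤ n-1 and b_n = t_n. Then for any pair of indices k_1 ≠ k_2 in {1,…,n}, the sum over all (t_1,…,t_n) ∈ {0,1}^n of t_{k_1}·b_{k_2} equals 2^{n-2}. -/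
open Finset

/-!
Write `b_k = t_k + c(t)`, where `c` does not depend on `t_k`. Shifting the `k`-th coordinate by
`c(t)` is then a bijection of `{0,1}^n` that leaves `t_{k₁}` unchanged, so the sum equals
`∑ t, t_{k₁} t_{k₂}`, which counts the `2^(n-2)` vectors with `t_{k₁} = t_{k₂} = 1`.
-/

section

variable {α : Type*} [Fintype α] [DecidableEq α]

theorem sum_prod_val_eq_two_pow (s : Finset α) :
    ∑ t : α → ZMod 2, ∏ k ∈ s, (t k).val = 2 ^ (Fintype.card α - #s) := by
  have hrestrict (t : α → ZMod 2) :
      ∏ k ∈ s, (t k).val = ∏ k, if k ∈ s then (t k).val else 1 := by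
    rw [Finset.prod_ite_mem, Finset.univ_inter]
  have hcoord (k : α) :
      ∑ x : ZMod 2, (if k ∈ s then x.val else 1) = if k ∈ s then 1 else 2 := by
    split_ifs <;> decide
  simp_rw [hrestrict]
  rw [← Fintype.prod_sum (fun k (x : ZMod 2) => if k ∈ s then x.val else 1)]
  simp [hcoord, Finset.prod_ite, Finset.filter_not, Finset.card_sdiff]

def Equiv.addAtCoord {G : Type*} [AddGroup G] (j : α) (c : (α → G) → G)
    (hc : ∀ t x, c (Function.update t j x) = c t) : (α → G) ≃ (α → G) where
  toFun t := Function.update t j (t j + c t)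
  invFun t := Function.update t j (t j - c t)
  left_inv t := by simp [hc]
  right_inv t := by simp [hc]

theorem sum_update_add_eq_sum {G M : Type*} [AddGroup G] [Fintype G] [AddCommMonoid M]
    (j : α) (c : (α → G) → G) (hc : ∀ t x, c (Function.update t j x) = c t)
    (F : (α → G) → M) :
    ∑ t, F (Function.update t j (t j + c t)) = ∑ t, F t :=
  (Equiv.addAtCoord j c hc).sum_comp F

end

theorem bvec_update_self_sub (n : ℕ) (a : Fin (n-1) → ZMod 2) (t : Fin n → ZMod 2) (k : Fin n)
    (x : ZMod 2) : bvec n a (Function.update t k x) k - x = bvec n a t k - t k := by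
  have hsum : ∑ i ∈ univ.filter (fun i : Fin n => k < i), Function.update t k x i
      = ∑ i ∈ univ.filter (fun i : Fin n => k < i), t i :=
    Finset.sum_congr rfl fun i hi => Function.update_of_ne (mem_filter.1 hi).2.ne' _ _
  simp [bvec, hsum]

theorem stmt1_general (n : ℕ) (a : Fin (n-1) → ZMod 2)
    (k₁ k₂ : Fin n) (hk : k₁ ≠ k₂) :
    ∑ t : Fin n → ZMod 2, (t k₁).val * (bvec n a t k₂).val = 2 ^ (n - 2) := by
  have hshift := sum_update_add_eq_sum k₂ (fun t => bvec n a t k₂ - t k₂)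
    (fun t x => by simpa using bvec_update_self_sub n a t k₂ x) (fun t => (t k₁).val * (t k₂).val)
  simp only [add_sub_cancel, Function.update_self, Function.update_of_ne hk] at hshift
  rw [hshift]
  simpa [Finset.prod_pair hk, Finset.card_pair hk] using sum_prod_val_eq_two_pow {k₁, k₂}

theorem stmt1 (n : ℕ) (hn : 2 ≤ n) (a : Fin (n-1) → ZMod 2)
    (k₁ k₂ : Fin n) (hk : k₁ ≠ k₂) :
    ∑ t : Fin n → ZMod 2, (t k₁).val * (bvec n a t k₂).val = 2 ^ (n - 2) :=
  stmt1_general n a k₁ k₂ hk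
end

section
/- Let n ≥ 1 and a = (a_1,…,a_{n-1}) ∈ {0,1}^{n-1}, and let P_a ⊂ [0,1)^2 be the set of 2^n points ( t_n/2 + t_{n-1}/4 + ⋯ + t_1/2^n , b_1/2 + b_2/4 + ⋯ + b_n/2^n ) for (t_1,…,t_n) ∈ {0,1}^n, where b_k = t_k XOR a_k·(t_{k+1} XOR ⋯ XOR t_n) for k < n and b_n = t_n. Then ∑_{(z_1,z_2) ∈ P_a} z_1·z_2 = (n + h + 1)/8 + (1/8)(−n + 2^{n+1} − 4 + 2/2^n), where h = #{i : a_i = 0}. -/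
/-!
Both coordinates are linear in the bits: `x = Σ_k t_k w_k` and `y = Σ_j b_j v_j` with
`w_k = 2^{-(n-k)}`, `v_j = 2^{-(j+1)}`, and each `b_j` is an `𝔽₂`-linear functional of `t`.
Writing `u.val = (1 - (-1)^u) / 2` and using orthogonality of characters, for nonzero functionals
`f, g` on `𝔽₂ⁿ` the sum `Σ_t f(t) g(t)` is `2ⁿ/4` if `f ≠ g` and `2ⁿ/2` if `f = g`. Now
`t_k = b_j` as functionals exactly when `k = j` and `a_j = 0` (with `a` extended by `0` at the last
index), so the sum is `2ⁿ/4 (Σ w)(Σ v)` plus `2ⁿ/4 · w_j v_j = 1/8` for each of the `h + 1`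
such indices.
-/

open Finset

noncomputable def xcoord (n : ℕ) (t : Fin n → ZMod 2) : ℝ :=
  ∑ k : Fin n, ((t k).val : ℝ) / 2 ^ (n - (k : ℕ))

noncomputable def ycoord (n : ℕ) (a : Fin (n-1) → ZMod 2) (t : Fin n → ZMod 2) : ℝ :=
  ∑ k : Fin n, ((bvec n a t k).val : ℝ) / 2 ^ ((k : ℕ) + 1)

noncomputable def zmodTwoSign (u : ZMod 2) : ℝ := (-1) ^ u.val

lemma zmodTwoSign_add (u v : ZMod 2) : zmodTwoSign (u + v) = zmodTwoSign u * zmodTwoSign v := by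
  rw [zmodTwoSign, ZMod.val_add, ← neg_one_pow_eq_pow_mod_two, pow_add]
  rfl

lemma zmodTwoSign_one : zmodTwoSign 1 = -1 := by
  simp [zmodTwoSign, ZMod.val_one]

lemma val_eq_one_sub_zmodTwoSign_div_two (u : ZMod 2) : (u.val : ℝ) = (1 - zmodTwoSign u) / 2 := by
  obtain rfl | rfl : u = 0 ∨ u = 1 := by revert u; decide
  · simp [zmodTwoSign]
  · rw [zmodTwoSign_one, ZMod.val_one]
    norm_num

section Characters

variable {V : Type*} [AddCommGroup V] [Fintype V]

-- Translating by a point where `f` is `1` flips every sign.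
lemma sum_zmodTwoSign_eq_zero {f : V →+ ZMod 2} (hf : f ≠ 0) : ∑ v, zmodTwoSign (f v) = 0 := by
  obtain ⟨v₀, hv₀⟩ : ∃ v₀, f v₀ = 1 := by
    by_contra! h
    refine hf (AddMonoidHom.ext fun v => ?_)
    have : ∀ u : ZMod 2, u ≠ 1 → u = 0 := by decide
    exact this _ (h v)
  have hflip : ∑ v, zmodTwoSign (f v) = -∑ v, zmodTwoSign (f v) := by
    rw [← Finset.sum_neg_distrib]
    refine Fintype.sum_equiv (Equiv.addRight v₀) _ _ fun v => ?_
    rw [Equiv.coe_addRight, map_add, zmodTwoSign_add, hv₀, zmodTwoSign_one]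
    ring
  linarith

lemma sum_val_mul_val {f g : V →+ ZMod 2} (hf : f ≠ 0) (hg : g ≠ 0) :
    ∑ v, ((f v).val : ℝ) * (g v).val = Fintype.card V / 4 * (if f = g then 2 else 1) := by
  have hterm : ∀ v, ((f v).val : ℝ) * (g v).val
      = (1 - zmodTwoSign (f v) - zmodTwoSign (g v) + zmodTwoSign ((f + g) v)) / 4 := by
    intro v
    rw [val_eq_one_sub_zmodTwoSign_div_two, val_eq_one_sub_zmodTwoSign_div_two,
      AddMonoidHom.add_apply, zmodTwoSign_add]
    ring
  simp only [hterm, ← Finset.sum_div, Finset.sum_add_distrib, Finset.sum_sub_distrib,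
    sum_zmodTwoSign_eq_zero hf, sum_zmodTwoSign_eq_zero hg]
  have hfg : f + g = 0 ↔ f = g := by
    rw [add_eq_zero_iff_eq_neg, ZModModule.neg_eq_self]
  split_ifs with h
  · simp [hfg.2 h, zmodTwoSign]
    ring
  · rw [sum_zmodTwoSign_eq_zero (mt hfg.1 h)]
    simp

end Characters

def extendedCoeff {n : ℕ} (a : Fin (n-1) → ZMod 2) (k : Fin n) : ZMod 2 :=
  if h : (k : ℕ) < n - 1 then a ⟨k, h⟩ else 0

lemma card_filter_extendedCoeff_eq_zero {n : ℕ} (hn : 1 ≤ n) (a : Fin (n-1) → ZMod 2) :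
    #{k : Fin n | extendedCoeff a k = 0} = #{i : Fin (n-1) | a i = 0} + 1 := by
  obtain ⟨m, rfl⟩ : ∃ m, n = m + 1 := ⟨n - 1, by omega⟩
  have hlast : extendedCoeff a (Fin.last m) = 0 := by simp [extendedCoeff]
  have hcast (i : Fin m) : extendedCoeff a i.castSucc = a i := dif_pos i.isLt
  simp only [Finset.card_filter, Fin.sum_univ_castSucc, hlast, hcast, if_pos]
  rfl

def bvecAddHom (n : ℕ) (a : Fin (n-1) → ZMod 2) (k : Fin n) : (Fin n → ZMod 2) →+ ZMod 2 :=
  AddMonoidHom.mk' (bvec n a · k) fun s t => by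
    simp only [bvec, Pi.add_apply, Finset.sum_add_distrib]
    ring

lemma bvecAddHom_apply (n : ℕ) (a : Fin (n-1) → ZMod 2) (k : Fin n) (t : Fin n → ZMod 2) :
    bvecAddHom n a k t = t k + extendedCoeff a k * ∑ i ∈ univ.filter (k < ·), t i :=
  rfl

lemma bvecAddHom_single (n : ℕ) (a : Fin (n-1) → ZMod 2) (j k : Fin n) :
    bvecAddHom n a k (Pi.single j 1)
      = (if j = k then 1 else 0) + extendedCoeff a k * if k < j then 1 else 0 := by
  simp [bvecAddHom_apply, Pi.single_apply, eq_comm]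

lemma bvecAddHom_ne_zero (n : ℕ) (a : Fin (n-1) → ZMod 2) (k : Fin n) : bvecAddHom n a k ≠ 0 := by
  intro h
  simpa [bvecAddHom_single] using DFunLike.congr_fun h (Pi.single k 1)

lemma evalAddMonoidHom_ne_zero {n : ℕ} (k : Fin n) :
    Pi.evalAddMonoidHom (fun _ => ZMod 2) k ≠ 0 := by
  intro h
  simpa using DFunLike.congr_fun h (Pi.single k 1)

lemma evalAddMonoidHom_eq_bvecAddHom_iff {n : ℕ} (a : Fin (n-1) → ZMod 2) (k j : Fin n) :
    Pi.evalAddMonoidHom (fun _ => ZMod 2) k = bvecAddHom n a j ↔ k = j ∧ extendedCoeff a j = 0 := by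
  constructor
  · intro h
    have hkj : k = j := by
      simpa [bvecAddHom_single, Pi.single_apply] using DFunLike.congr_fun h (Pi.single j 1)
    subst hkj
    refine ⟨rfl, ?_⟩
    by_cases hk : (k : ℕ) < n - 1
    · have hsucc := DFunLike.congr_fun h (Pi.single ⟨k + 1, by omega⟩ 1)
      simpa [bvecAddHom_single, Pi.single_apply, Fin.ext_iff, Fin.lt_def] using hsucc.symm
    · exact dif_neg hk
  · rintro ⟨rfl, hk⟩
    ext t
    simp [bvecAddHom_apply, hk]

lemma sum_val_mul_val_bvec (n : ℕ) (a : Fin (n-1) → ZMod 2) (k j : Fin n) :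
    ∑ t : Fin n → ZMod 2, ((t k).val : ℝ) * (bvec n a t j).val
      = 2 ^ n / 4 * (if k = j ∧ extendedCoeff a j = 0 then 2 else 1) := by
  refine (sum_val_mul_val (evalAddMonoidHom_ne_zero k) (bvecAddHom_ne_zero n a j)).trans ?_
  simp [evalAddMonoidHom_eq_bvecAddHom_iff]

lemma sum_one_div_two_pow_succ (n : ℕ) :
    ∑ j : Fin n, (1 : ℝ) / 2 ^ ((j : ℕ) + 1) = 1 - 1 / 2 ^ n := by
  induction n with
  | zero => simp
  | succ n ih =>
    simp only [Fin.sum_univ_castSucc, Fin.val_castSucc, ih, Fin.val_last]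
    field_simp
    ring

lemma sum_one_div_two_pow_sub (n : ℕ) : ∑ k : Fin n, (1 : ℝ) / 2 ^ (n - k) = 1 - 1 / 2 ^ n := by
  rw [← sum_one_div_two_pow_succ]
  refine Fintype.sum_equiv Fin.revPerm _ _ fun k => ?_
  rw [Fin.revPerm_apply, Fin.val_rev]
  congr 2
  omega

lemma sum_xcoord_mul_ycoord (n : ℕ) (a : Fin (n-1) → ZMod 2) :
    ∑ t : Fin n → ZMod 2, xcoord n t * ycoord n a t
      = 2 ^ n / 4
          * ((∑ k : Fin n, (1 : ℝ) / 2 ^ (n - k)) * ∑ j : Fin n, (1 : ℝ) / 2 ^ ((j : ℕ) + 1))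
        + #{j : Fin n | extendedCoeff a j = 0} * (2 ^ n / 4 * (1 / 2 ^ (n + 1))) := by
  set w : Fin n → ℝ := fun k => 1 / 2 ^ (n - (k : ℕ))
  set v : Fin n → ℝ := fun j => 1 / 2 ^ ((j : ℕ) + 1)
  have hwv (j : Fin n) : w j * v j = 1 / 2 ^ (n + 1) := by
    rw [one_div_mul_one_div, ← pow_add]
    congr 2
    omega
  have hsplit (k j : Fin n) :
      2 ^ n / 4 * (if k = j ∧ extendedCoeff a j = 0 then (2 : ℝ) else 1) * (w k * v j)
        = 2 ^ n / 4 * (w k * v j)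
          + if k = j then (if extendedCoeff a j = 0 then 2 ^ n / 4 * (w j * v j) else 0)
            else 0 := by
    by_cases hkj : k = j
    · subst hkj
      by_cases hc : extendedCoeff a k = 0 <;> simp only [hc, true_and, if_true, if_false] <;> ring
    · simp only [hkj, false_and, if_false]
      ring
  calc ∑ t : Fin n → ZMod 2, xcoord n t * ycoord n a t
      = ∑ k, ∑ j, (∑ t : Fin n → ZMod 2, ((t k).val : ℝ) * (bvec n a t j).val) * (w k * v j) := by
        simp only [xcoord, ycoord]
        simp_rw [sum_mul_sum, sum_mul]
        rw [sum_comm]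
        refine sum_congr rfl fun k _ => ?_
        rw [sum_comm]
        refine sum_congr rfl fun j _ => sum_congr rfl fun t _ => ?_
        ring
    _ = ∑ k, ∑ j, 2 ^ n / 4 * (w k * v j)
          + ∑ j, if extendedCoeff a j = 0 then 2 ^ n / 4 * (1 / 2 ^ (n + 1)) else 0 := by
        simp only [sum_val_mul_val_bvec, hsplit, sum_add_distrib, sum_ite_eq, mem_univ, if_true,
          hwv]
    _ = _ := by
        rw [← sum_filter, sum_const, nsmul_eq_mul, sum_mul_sum, mul_sum]
        simp only [mul_sum]
        rfl

theorem stmt3 (n : ℕ) (hn : 1 ≤ n) (a : Fin (n-1) → ZMod 2) :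
    ∑ t : Fin n → ZMod 2, xcoord n t * ycoord n a t
      = ((n : ℝ) + ((Finset.univ.filter (fun i : Fin (n-1) => a i = 0)).card : ℝ) + 1) / 8
        + (1 / 8) * (-(n : ℝ) + 2 ^ (n + 1) - 4 + 2 / 2 ^ n) := by
  rw [sum_xcoord_mul_ycoord, card_filter_extendedCoeff_eq_zero hn, sum_one_div_two_pow_sub,
    sum_one_div_two_pow_succ]
  push_cast
  field_simp
  ring
end
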